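/- arXiv:2411.08465 — 7 statements merged into one kernel-verified Lean document; each statement's English description precedes it below -/
import Mathlib

section
/- Let w ∈ S_n, let α be a strictly increasing sequence of length l in A_l(w), let j ≤ l, and let r be a positive integer not in α with r ≤ w^l_j. Then R_{j,r}(α), the increasing rearrangement of α with α_j replaced by r, also lies in A_l(w). -/
/-- The first `l` values of `w`, as a finset of natural numbers. -/
def firstVals {n : ℕ} (w : Equiv.Perm (Fin n)) (l : ℕ) : Finset ℕ :=
  (Finset.univ.filter (fun j : Fin n => (j : ℕ) < l)).image (fun j => (w j : ℕ))

/-- `w^l`: the increasing rearrangement of the first `l` values of `w`. -/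
def wSorted {n : ℕ} (w : Equiv.Perm (Fin n)) (l : ℕ) : List ℕ :=
  (firstVals w l).sort (· ≤ ·)

/-- `A_l(w)`: strictly increasing sequences bounded entrywise by `w^l`. -/
def A {n : ℕ} (w : Equiv.Perm (Fin n)) (l : ℕ) : Set (List ℕ) :=
  {a | a.Chain' (· < ·) ∧ List.Forall₂ (· ≤ ·) a (wSorted w l)}

/-- `R_{j,r}(α)`: replace the `j`-th entry of `α` by `r` and reorder increasingly. -/
def Rrep (j r : ℕ) (a : List ℕ) : List ℕ :=
  List.insertionSort (· ≤ ·) (a.set j r)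

/-!
Replacing one entry of `α` by some `r ≤ w^l_j` gives a list `s` that is still bounded entrywise
by `w^l`. Sorting preserves such a bound against an increasing list: the first `i + 1` entries
of `s` are all `≤ w^l_i`, so at least `i + 1` entries of the sorted list are `≤ w^l_i`, and hence
so is its `i`-th entry. Strictness survives because `r ∉ α` keeps the entries distinct.
-/

namespace List

theorem forall₂_iff_getElem {α β : Type*} {R : α → β → Prop} {l₁ : List α} {l₂ : List β} :
    Forall₂ R l₁ l₂ ↔
      l₁.length = l₂.length ∧ ∀ i (h₁ : i < l₁.length) (h₂ : i < l₂.length), R l₁[i] l₂[i] := by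
  simp only [forall₂_iff_get, get_eq_getElem]

theorem Forall₂.set {α β : Type*} {R : α → β → Prop} {l₁ : List α} {l₂ : List β}
    (h : Forall₂ R l₁ l₂) {j : ℕ} (hj : j < l₂.length) {a : α} (ha : R a l₂[j]) :
    Forall₂ R (l₁.set j a) l₂ := by
  obtain ⟨hlen, hR⟩ := forall₂_iff_getElem.mp h
  refine forall₂_iff_getElem.mpr ⟨by rw [length_set, hlen], fun i h₁ h₂ => ?_⟩
  rw [getElem_set]
  split_ifs with hji
  · exact hji ▸ ha
  · exact hR i (length_set ▸ h₁) h₂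

theorem lt_countP_of_forall_getElem {α : Type*} {p : α → Bool} {l : List α} {i : ℕ}
    (hi : i < l.length) (h : ∀ m (hm : m < l.length), m ≤ i → p l[m]) :
    i < l.countP p := by
  have htake : (l.take (i + 1)).countP p = i + 1 := by
    rw [countP_eq_length.mpr, length_take_of_le hi]
    intro y hy
    obtain ⟨m, hm, rfl⟩ := mem_iff_getElem.mp hy
    rw [length_take_of_le hi] at hm
    rw [getElem_take]
    exact h m _ (by omega)
  exact (htake ▸ (take_sublist (i + 1) l).countP_le (p := p) : i + 1 ≤ _)

variable {α : Type*} [LinearOrder α]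

theorem SortedLE.getElem_le_of_lt_countP {l : List α} (hl : l.SortedLE) {i : ℕ}
    (hi : i < l.length) {x : α} (hc : i < l.countP (· ≤ x)) : l[i] ≤ x := by
  by_contra! hx
  have hdrop : (l.drop i).countP (· ≤ x) = 0 := by
    refine countP_eq_zero.mpr fun y hy => ?_
    obtain ⟨m, hm, rfl⟩ := mem_iff_getElem.mp hy
    have him : i + m < l.length := by rw [length_drop] at hm; omega
    rw [getElem_drop]
    have : l[i] ≤ l[i + m] := sortedLE_iff_getElem_le_getElem_of_le.mp hl (Nat.le_add_right i m)
    simpa using hx.trans_le this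
  have : l.countP (· ≤ x) ≤ i := by
    rw [← take_append_drop i l, countP_append, hdrop, Nat.add_zero]
    exact countP_le_length.trans (length_take_le i l)
  omega

theorem SortedLE.getElem_le_of_perm {l s : List α} (hl : l.SortedLE) (hp : l ~ s) {i : ℕ}
    (hi : i < l.length) {x : α} (h : ∀ m (hm : m < s.length), m ≤ i → s[m] ≤ x) : l[i] ≤ x :=
  hl.getElem_le_of_lt_countP hi <| hp.countP_eq _ ▸
    lt_countP_of_forall_getElem (hp.length_eq ▸ hi) fun m hm hmi => by simpa using h m hm hmi

theorem Forall₂.insertionSort_left {s w : List α} (hw : w.SortedLE) (h : Forall₂ (· ≤ ·) s w) :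
    Forall₂ (· ≤ ·) (s.insertionSort (· ≤ ·)) w := by
  obtain ⟨hlen, hle⟩ := forall₂_iff_getElem.mp h
  refine forall₂_iff_getElem.mpr ⟨(length_insertionSort _ _).trans hlen, fun i h₁ h₂ => ?_⟩
  refine sortedLE_insertionSort.getElem_le_of_perm (perm_insertionSort _ _) h₁ fun m hm hmi => ?_
  exact (hle m hm (hlen ▸ hm)).trans (sortedLE_iff_getElem_le_getElem_of_le.mp hw hmi)

theorem SortedLT.insertionSort_set {l : List α} (hl : l.SortedLT) (j : ℕ) {r : α} (hr : r ∉ l) :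
    ((l.set j r).insertionSort (· ≤ ·)).SortedLT :=
  sortedLE_insertionSort.sortedLT_of_nodup <|
    (perm_insertionSort _ _).nodup_iff.mpr (hl.nodup.set hr)

end List

/-- If `α ∈ A_l(w)`, `r ∉ α` and `r ≤ w^l_j`, then `R_{j,r}(α) ∈ A_l(w)`. -/
theorem stmt6 (n : ℕ) (w : Equiv.Perm (Fin n)) (l : ℕ) (a : List ℕ) (ha : a ∈ A w l)
    (j : ℕ) (hj : j < a.length) (r : ℕ) (hr : r ∉ a)
    (hb : r ≤ (wSorted w l).getD j 0) :
    Rrep j r a ∈ A w l := by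
  obtain ⟨hlt, hbound⟩ := ha
  have hjw : j < (wSorted w l).length := hbound.length_eq ▸ hj
  have hset : List.Forall₂ (· ≤ ·) (a.set j r) (wSorted w l) :=
    hbound.set hjw (by rwa [List.getD_eq_getElem _ _ hjw] at hb)
  exact ⟨(hlt.sortedLT.insertionSort_set j hr).isChain,
    hset.insertionSort_left (Finset.sortedLT_sort _).sortedLE⟩
end

section
/- Let w ∈ S_n and 1 ≤ i < n, and define A_{l,i}(w) := {α ∈ A_l(w) : s_i·α ∉ A_l(w)}, where s_i·α denotes the increasing rearrangement of the entrywise application of the transposition s_i to α. Then A_{l,i}(w) is nonempty if and only if ℓ(s_i w) > ℓ(w) and w⁻¹(i) ≤ l < w⁻¹(i+1). -/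
def invCount {n : ℕ} (w : Equiv.Perm (Fin n)) : ℕ :=
  (Finset.univ.filter (fun p : Fin n × Fin n => p.1 < p.2 ∧ w p.2 < w p.1)).card

def simpleT (n : ℕ) (i : ℕ) (h : i + 1 < n) : Equiv.Perm (Fin n) :=
  Equiv.swap ⟨i, Nat.lt_of_succ_lt h⟩ ⟨i + 1, h⟩

/-- The entrywise action of the transposition `s_i = (i, i+1)` on a sequence,
followed by reordering increasingly. -/
def siAct (i : ℕ) (a : List ℕ) : List ℕ :=
  List.insertionSort (· ≤ ·) (a.map (fun x => Equiv.swap i (i + 1) x))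

/-- `A_{l,i}(w) = {α ∈ A_l(w) : s_i·α ∉ A_l(w)}`. -/
def Ai {n : ℕ} (w : Equiv.Perm (Fin n)) (l : ℕ) (i : ℕ) : Set (List ℕ) :=
  {a | a ∈ A w l ∧ siAct i a ∉ A w l}

/-!
Sorted lists are compared entrywise by counting: for sorted `α`, `L` of equal length,
`α ≤ L` entrywise iff `#{x ∈ α | t ≤ x} ≤ #{y ∈ L | t ≤ y}` for every threshold `t`.
Applying `s_i` only changes the count at threshold `i + 1`, by `[i ∈ α] - [i + 1 ∈ α]`. Hence
`s_i·α` leaves `A_l(w)` exactly when `i ∈ α`, `i + 1 ∉ α` and `α` attains the bound at `i + 1`;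
comparing with the neighbouring thresholds `i` and `i + 2` this forces `i ∈ w^l` and
`i + 1 ∉ w^l`, and conversely `α = w^l` is then a witness. Finally, `i ∈ w^l` and `i + 1 ∉ w^l`
say `w⁻¹(i) ≤ l < w⁻¹(i+1)`, which already implies `ℓ(s_i w) > ℓ(w)`: left multiplication by
the adjacent transposition `s_i` creates or removes exactly the inversion at positions
`w⁻¹(i), w⁻¹(i+1)`.
-/

open List

namespace List

variable {α : Type*} [LinearOrder α]

theorem countP_le_countP_of_forall₂_le {a b : List α} (h : Forall₂ (· ≤ ·) a b) (t : α) :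
    a.countP (t ≤ ·) ≤ b.countP (t ≤ ·) := by
  induction h with
  | nil => rfl
  | @cons x y _ _ hxy _ ih =>
    simp only [countP_cons, decide_eq_true_eq]
    split_ifs with htx hty hty
    · omega
    · exact absurd (htx.trans hxy) hty
    all_goals omega

theorem forall₂_le_of_countP_le {a b : List α} (ha : a.SortedLE) (hb : b.SortedLE)
    (hlen : a.length = b.length) (h : ∀ t, a.countP (t ≤ ·) ≤ b.countP (t ≤ ·)) :
    Forall₂ (· ≤ ·) a b := by
  induction a generalizing b with
  | nil => cases b <;> simp_all
  | cons x a ih =>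
    obtain _ | ⟨y, b⟩ := b
    · simp at hlen
    have hxa : ∀ z ∈ a, x ≤ z := fun _ => rel_of_pairwise_cons ha.pairwise
    have hyb : ∀ z ∈ b, y ≤ z := fun _ => rel_of_pairwise_cons hb.pairwise
    simp only [length_cons, Nat.add_right_cancel_iff] at hlen
    have hxy : x ≤ y := by
      by_contra hyx
      have hx := h x
      rw [countP_cons, countP_cons, countP_eq_length.2 fun z hz => by simpa using hxa z hz] at hx
      have := countP_le_length (p := fun z => decide (x ≤ z)) (l := b)
      simp only [le_refl, decide_true, if_true, decide_eq_true_eq, if_neg hyx] at hx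
      omega
    refine .cons hxy (ih ha.pairwise.of_cons.sortedLE hb.pairwise.of_cons.sortedLE hlen fun t => ?_)
    by_cases hty : t ≤ y
    · have hb' : b.countP (t ≤ ·) = b.length :=
        countP_eq_length.2 fun z hz => by simpa using hty.trans (hyb z hz)
      exact hb' ▸ hlen ▸ countP_le_length
    · have ht := h t
      simp only [countP_cons, decide_eq_true_eq, if_neg hty] at ht
      split_ifs at ht <;> omega

theorem forall₂_le_iff_countP_le {a b : List α} (ha : a.SortedLE) (hb : b.SortedLE)
    (hlen : a.length = b.length) :
    Forall₂ (· ≤ ·) a b ↔ ∀ t, a.countP (t ≤ ·) ≤ b.countP (t ≤ ·) :=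
  ⟨countP_le_countP_of_forall₂_le, forall₂_le_of_countP_le ha hb hlen⟩

theorem countP_le_eq_countP_succ_le_add_count (t : ℕ) (a : List ℕ) :
    a.countP (t ≤ ·) = a.countP (t + 1 ≤ ·) + a.count t := by
  induction a with
  | nil => rfl
  | cons x a ih =>
    simp only [countP_cons, count_cons, ih, decide_eq_true_eq, beq_iff_eq]
    split_ifs <;> omega

theorem countP_le_map_swap_of_ne {t i : ℕ} (ht : t ≠ i + 1) (a : List ℕ) :
    (a.map (Equiv.swap i (i + 1))).countP (t ≤ ·) = a.countP (t ≤ ·) := by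
  rw [countP_map]
  refine countP_congr fun x _ => ?_
  simp only [Function.comp_apply, Equiv.swap_apply_def]
  split_ifs <;> simp only [decide_eq_true_eq] <;> omega

theorem countP_succ_le_map_swap_add_count (i : ℕ) (a : List ℕ) :
    (a.map (Equiv.swap i (i + 1))).countP (i + 1 ≤ ·) + a.count (i + 1) =
      a.countP (i + 1 ≤ ·) + a.count i := by
  induction a with
  | nil => rfl
  | cons x a ih =>
    simp only [map_cons, countP_cons, count_cons, decide_eq_true_eq, beq_iff_eq,
      Equiv.swap_apply_def]
    split_ifs <;> omega

end List

theorem siAct_perm (i : ℕ) (a : List ℕ) : siAct i a ~ a.map (Equiv.swap i (i + 1)) :=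
  perm_insertionSort _ _

theorem sortedLT_siAct {a : List ℕ} (ha : a.Nodup) (i : ℕ) : (siAct i a).SortedLT :=
  sortedLE_insertionSort.sortedLT_of_nodup
    ((siAct_perm i a).nodup_iff.2 (ha.map (Equiv.injective _)))

theorem forall₂_le_siAct_iff {L a : List ℕ} (hL : L.SortedLE) (ha : a.Nodup)
    (haL : Forall₂ (· ≤ ·) a L) (i : ℕ) :
    Forall₂ (· ≤ ·) (siAct i a) L ↔ (siAct i a).countP (i + 1 ≤ ·) ≤ L.countP (i + 1 ≤ ·) := by
  have hlen : (siAct i a).length = L.length := by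
    rw [(siAct_perm i a).length_eq, length_map, haL.length_eq]
  rw [forall₂_le_iff_countP_le (sortedLT_siAct ha i).sortedLE hL hlen]
  refine ⟨fun h => h _, fun h t => ?_⟩
  by_cases ht : t = i + 1
  · exact ht ▸ h
  · rw [(siAct_perm i a).countP_eq, countP_le_map_swap_of_ne ht]
    exact countP_le_countP_of_forall₂_le haL t

theorem exists_forall₂_le_not_forall₂_le_siAct_iff {L : List ℕ} (hL : L.SortedLT) (i : ℕ) :
    (∃ a : List ℕ, a.SortedLT ∧ Forall₂ (· ≤ ·) a L ∧ ¬Forall₂ (· ≤ ·) (siAct i a) L) ↔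
      i ∈ L ∧ i + 1 ∉ L := by
  constructor
  · rintro ⟨a, ha, haL, hs⟩
    rw [forall₂_le_siAct_iff hL.sortedLE ha.nodup haL, (siAct_perm i a).countP_eq, not_le] at hs
    have hsw := countP_succ_le_map_swap_add_count i a
    have h₀ := countP_le_countP_of_forall₂_le haL i
    have h₁ := countP_le_countP_of_forall₂_le haL (i + 1)
    have h₂ := countP_le_countP_of_forall₂_le haL (i + 1 + 1)
    rw [countP_le_eq_countP_succ_le_add_count i a, countP_le_eq_countP_succ_le_add_count i L] at h₀
    have ha₁ := countP_le_eq_countP_succ_le_add_count (i + 1) a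
    have hL₁ := countP_le_eq_countP_succ_le_add_count (i + 1) L
    have hai := nodup_iff_count_le_one.1 ha.nodup i
    rw [← count_pos_iff, ← count_eq_zero]
    omega
  · rintro ⟨hi, hi₁⟩
    have hLL : Forall₂ (· ≤ ·) L L := forall₂_same.2 fun _ _ => le_rfl
    refine ⟨L, hL, hLL, ?_⟩
    rw [forall₂_le_siAct_iff hL.sortedLE hL.nodup hLL, (siAct_perm i L).countP_eq, not_le]
    have hsw := countP_succ_le_map_swap_add_count i L
    rw [count_eq_zero.2 hi₁] at hsw
    have := count_pos_iff.2 hi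
    omega

theorem mem_A_iff {n : ℕ} {w : Equiv.Perm (Fin n)} {l : ℕ} {a : List ℕ} :
    a ∈ A w l ↔ a.SortedLT ∧ Forall₂ (· ≤ ·) a (wSorted w l) := by
  rw [sortedLT_iff_isChain]
  rfl

theorem Ai_nonempty_iff {n : ℕ} (w : Equiv.Perm (Fin n)) (l i : ℕ) :
    (Ai w l i).Nonempty ↔ i ∈ firstVals w l ∧ i + 1 ∉ firstVals w l := by
  simp only [← Finset.mem_sort (· ≤ ·) (s := firstVals w l)]
  rw [← exists_forall₂_le_not_forall₂_le_siAct_iff (Finset.sortedLT_sort _)]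
  simp only [Set.Nonempty, Ai, Set.mem_ofPred_eq, mem_A_iff]
  constructor
  · rintro ⟨a, ⟨ha, haL⟩, hs⟩
    exact ⟨a, ha, haL, fun h => hs ⟨sortedLT_siAct ha.nodup i, h⟩⟩
  · rintro ⟨a, ha, haL, hs⟩
    exact ⟨a, ⟨ha, haL⟩, fun h => hs h.2⟩

theorem mem_firstVals_iff {n : ℕ} (w : Equiv.Perm (Fin n)) (l : ℕ) (x : Fin n) :
    (x : ℕ) ∈ firstVals w l ↔ (w⁻¹ x : ℕ) < l := by
  simp [firstVals, Fin.val_inj, ← Equiv.Perm.eq_inv_iff_eq]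

theorem Fin.swap_apply_lt_swap_apply_iff {n : ℕ} {a b x y : Fin n} (hab : (b : ℕ) = a + 1)
    (h : ¬(x = a ∧ y = b)) (h' : ¬(x = b ∧ y = a)) :
    Equiv.swap a b x < Equiv.swap a b y ↔ x < y := by
  simp only [Equiv.swap_apply_def, Fin.lt_def]
  split_ifs <;> simp_all [Fin.ext_iff] <;> omega

theorem invCount_swap_mul_add {n : ℕ} (w : Equiv.Perm (Fin n)) {a b : Fin n}
    (hab : (b : ℕ) = a + 1) :
    invCount (Equiv.swap a b * w) + (if w⁻¹ b < w⁻¹ a then 1 else 0) =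
      invCount w + (if w⁻¹ a < w⁻¹ b then 1 else 0) := by
  set P : Fin n × Fin n := (w⁻¹ a, w⁻¹ b)
  have hne : w⁻¹ a ≠ w⁻¹ b := fun h => by simpa [Fin.ext_iff, hab] using w⁻¹.injective h
  have hPP : P ≠ P.swap := fun h => hne (Prod.ext_iff.1 h).1
  have hoff : ∀ p ∉ ({P, P.swap} : Finset _),
      (p.1 < p.2 ∧ (Equiv.swap a b * w) p.2 < (Equiv.swap a b * w) p.1) ↔
        (p.1 < p.2 ∧ w p.2 < w p.1) := by
    intro p hp
    simp only [Finset.mem_insert, Finset.mem_singleton, Prod.ext_iff, P, Prod.fst_swap,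
      Prod.snd_swap, Equiv.Perm.eq_inv_iff_eq, not_or] at hp
    rw [Equiv.Perm.mul_apply, Equiv.Perm.mul_apply,
      Fin.swap_apply_lt_swap_apply_iff hab (by tauto) (by tauto)]
  rw [invCount, invCount, Finset.card_filter, Finset.card_filter,
    ← Finset.sum_add_sum_compl {P, P.swap}, ← Finset.sum_add_sum_compl {P, P.swap}
      (fun p => if p.1 < p.2 ∧ w p.2 < w p.1 then 1 else 0),
    Finset.sum_congr rfl fun p hp => if_congr (hoff p (Finset.mem_compl.1 hp)) rfl rfl,
    Finset.sum_pair hPP, Finset.sum_pair hPP]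
  have hlt : a < b := by simp [Fin.lt_def, hab]
  simp only [P, Prod.swap_prod_mk, Equiv.Perm.coe_mul, Function.comp_apply, Equiv.Perm.coe_inv,
    Equiv.apply_symm_apply, Equiv.swap_apply_left, Equiv.swap_apply_right, hlt, hlt.not_gt,
    and_true, and_false, if_false, add_zero, zero_add]
  omega

theorem invCount_lt_invCount_swap_mul_iff {n : ℕ} (w : Equiv.Perm (Fin n)) {a b : Fin n}
    (hab : (b : ℕ) = a + 1) :
    invCount w < invCount (Equiv.swap a b * w) ↔ w⁻¹ a < w⁻¹ b := by
  have hsum := invCount_swap_mul_add w hab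
  by_cases h : w⁻¹ a < w⁻¹ b
  · simp only [h, h.not_gt, if_true, if_false] at hsum
    exact iff_of_true (by omega) h
  · simp only [h, if_false] at hsum
    exact iff_of_false (by split_ifs at hsum <;> omega) h

-- Positions and values are 0-based: the paper's `w⁻¹(i) ≤ l` reads `w⁻¹ i < l` here.
/-- `A_{l,i}(w)` is nonempty iff `ℓ(s_i w) > ℓ(w)` and `w⁻¹(i) ≤ l < w⁻¹(i+1)`
(written 0-based: the position of `i` is `< l` and the position of `i+1` is `≥ l`). -/
theorem stmt7 (n : ℕ) (w : Equiv.Perm (Fin n)) (i : ℕ) (h : i + 1 < n) (l : ℕ) :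
    (Ai w l i).Nonempty ↔
      (invCount w < invCount (simpleT n i h * w) ∧
        (w⁻¹ ⟨i, Nat.lt_of_succ_lt h⟩ : ℕ) < l ∧ l ≤ (w⁻¹ ⟨i + 1, h⟩ : ℕ)) := by
  have h₀ := mem_firstVals_iff w l ⟨i, Nat.lt_of_succ_lt h⟩
  have h₁ := mem_firstVals_iff w l ⟨i + 1, h⟩
  rw [Ai_nonempty_iff, h₀, h₁, simpleT, invCount_lt_invCount_swap_mul_iff w rfl, Fin.lt_def]
  omega
end

section
/- Let w ∈ S_n and 1 ≤ i < n with ℓ(s_i w) > ℓ(w), and suppose w⁻¹(i) ≤ l < w⁻¹(i+1), so there is an index j with w^l_j = i. Then A_{l,i}(w) := {α ∈ A_l(w) : s_i·α ∉ A_l(w)} equals exactly the set of α ∈ A_l(w) with α_j = i and such that i+1 does not appear in α. -/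
/-!
Write `σ` for the transposition `(i, i+1)` acting on values. If `i` and `i+1` both occur in the
strictly increasing sequence `α`, or neither does, then `σ` permutes the entries of `α` and
`s_i·α = α`. Otherwise `σ` preserves the order of the entries of `α`, so `s_i·α` is `α` with one
entry moved by one: lowering an entry `i+1` to `i` keeps `α` in `A_l(w)`, while raising an entry
`α_k = i` to `i+1` breaks the bound `α_k ≤ w^l_k` exactly when `w^l_k = i`, that is when `k = j`.
-/

open Equiv List

lemma List.getD_eq_iff_of_ne {α : Type*} {l : List α} {n : ℕ} {d x : α} (hd : d ≠ x) :
    l.getD n d = x ↔ l[n]? = some x := by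
  rw [getD_eq_getElem?_getD, Option.getD_eq_iff]
  exact ⟨fun h => h.resolve_right fun h' => hd h'.2, Or.inl⟩

lemma List.mk_mem_zip_iff_of_getElem? {α β : Type*} {a : List α} {b : List β} {j : ℕ}
    {x : α} {y : β} (hb : b.Nodup) (hbj : b[j]? = some y) : (x, y) ∈ a.zip b ↔ a[j]? = some x := by
  have hj : j < b.length := (List.getElem?_eq_some_iff.1 hbj).1
  simp only [mem_iff_getElem?, getElem?_zip_eq_some]
  constructor
  · rintro ⟨m, ham, hbm⟩
    rwa [← (getElem?_inj hj hb).1 (hbj.trans hbm.symm)] at ham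
  · exact fun haj => ⟨j, haj, hbj⟩

section SwapSucc

variable {i : ℕ}

lemma swap_succ_lt_swap_succ {x y : ℕ} (hxy : x < y) (hne : ¬(x = i ∧ y = i + 1)) :
    swap i (i + 1) x < swap i (i + 1) y := by
  simp only [swap_apply_def]
  split_ifs <;> omega

lemma swap_succ_le_iff {x y : ℕ} (hxy : x ≤ y) :
    swap i (i + 1) x ≤ y ↔ ¬(x = i ∧ y = i) := by
  simp only [swap_apply_def]
  split_ifs <;> omega

lemma swap_succ_mem_iff {a : List ℕ} (hiff : i ∈ a ↔ i + 1 ∈ a) (x : ℕ) :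
    swap i (i + 1) x ∈ a ↔ x ∈ a := by
  rcases eq_or_ne x i with rfl | hx
  · simpa using hiff.symm
  rcases eq_or_ne x (i + 1) with rfl | hx'
  · simpa using hiff
  · rw [swap_apply_of_ne_of_ne hx hx']

end SwapSucc

section SiAct

variable {i : ℕ} {a : List ℕ}

lemma siAct_eq_of_perm {b : List ℕ} (hb : b.Pairwise (· ≤ ·))
    (hp : (a.map (swap i (i + 1))).Perm b) : siAct i a = b :=
  (perm_insertionSort _ _).trans hp |>.eq_of_pairwise' (pairwise_insertionSort _ _) hb

lemma siAct_eq_self (ha : a.Pairwise (· < ·)) (hiff : i ∈ a ↔ i + 1 ∈ a) : siAct i a = a := by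
  refine siAct_eq_of_perm (ha.imp le_of_lt) ?_
  rw [perm_ext_iff_of_nodup (ha.nodup.map (swap i (i + 1)).injective) ha.nodup]
  intro x
  rw [mem_map_of_involutive (swap_apply_self i (i + 1)), swap_succ_mem_iff hiff]

lemma pairwise_map_swap_succ (ha : a.Pairwise (· < ·)) (hnot : ¬(i ∈ a ∧ i + 1 ∈ a)) :
    (a.map (swap i (i + 1))).Pairwise (· < ·) :=
  pairwise_map.2 <| ha.imp_of_mem fun hx hy hxy =>
    swap_succ_lt_swap_succ hxy fun ⟨hxi, hyi⟩ => hnot ⟨hxi ▸ hx, hyi ▸ hy⟩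

lemma siAct_eq_map_swap_succ (ha : a.Pairwise (· < ·)) (hnot : ¬(i ∈ a ∧ i + 1 ∈ a)) :
    siAct i a = a.map (swap i (i + 1)) :=
  siAct_eq_of_perm ((pairwise_map_swap_succ ha hnot).imp le_of_lt) (Perm.refl _)

lemma forall₂_map_swap_succ_iff {b : List ℕ} (hab : Forall₂ (· ≤ ·) a b) :
    Forall₂ (· ≤ ·) (a.map (swap i (i + 1))) b ↔ (i, i) ∉ a.zip b := by
  rw [forall₂_map_left_iff, forall₂_iff_zip]
  rw [forall₂_iff_zip] at hab
  refine ⟨fun h hii => (swap_succ_le_iff (hab.2 hii)).1 (h.2 hii) ⟨rfl, rfl⟩,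
    fun h => ⟨hab.1, fun hxy => (swap_succ_le_iff (hab.2 hxy)).2 ?_⟩⟩
  rintro ⟨rfl, rfl⟩
  exact h hxy

theorem siAct_bounded_iff {b : List ℕ} {j : ℕ} (ha : a.IsChain (· < ·))
    (hab : Forall₂ (· ≤ ·) a b) (hb : b.Nodup) (hbj : b[j]? = some i) :
    ((siAct i a).IsChain (· < ·) ∧ Forall₂ (· ≤ ·) (siAct i a) b) ↔
      ¬(a[j]? = some i ∧ i + 1 ∉ a) := by
  have ha' : a.Pairwise (· < ·) := isChain_iff_pairwise.1 ha
  by_cases hiff : i ∈ a ↔ i + 1 ∈ a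
  · rw [siAct_eq_self ha' hiff]
    exact iff_of_true ⟨ha, hab⟩ fun ⟨haj, hi⟩ => hi (hiff.1 (mem_of_getElem? haj))
  · have hnot : ¬(i ∈ a ∧ i + 1 ∈ a) := fun h => hiff (iff_of_true h.1 h.2)
    rw [siAct_eq_map_swap_succ ha' hnot, isChain_iff_pairwise,
      forall₂_map_swap_succ_iff hab, mk_mem_zip_iff_of_getElem? hb hbj]
    refine ⟨fun h ⟨haj, _⟩ => h.2 haj, fun h => ⟨pairwise_map_swap_succ ha' hnot, fun haj => ?_⟩⟩
    exact h ⟨haj, fun hi => hnot ⟨mem_of_getElem? haj, hi⟩⟩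

end SiAct

theorem stmt8_general (n : ℕ) (w : Equiv.Perm (Fin n)) (i : ℕ) (l : ℕ)
    (j : ℕ) (hj : (wSorted w l).getD j (i + 1) = i) :
    Ai w l i = {a | a ∈ A w l ∧ a.getD j (i + 1) = i ∧ (i + 1) ∉ a} := by
  have hne : i + 1 ≠ i := Nat.succ_ne_self i
  rw [getD_eq_iff_of_ne hne] at hj
  ext a
  simp only [Ai, Set.mem_ofPred_eq, and_congr_right_iff]
  rintro ⟨ha, hab⟩
  rw [getD_eq_iff_of_ne hne]
  exact (not_congr (siAct_bounded_iff ha hab (Finset.sort_nodup _ _) hj)).trans not_not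

/-- Under `ℓ(s_i w) > ℓ(w)` and `w⁻¹(i) ≤ l < w⁻¹(i+1)`, with `j` the index where
`w^l_j = i`, the set `A_{l,i}(w)` is exactly the set of `α ∈ A_l(w)` with `α_j = i`
in which `i+1` does not appear. -/
theorem stmt8 (n : ℕ) (w : Equiv.Perm (Fin n)) (i : ℕ) (h : i + 1 < n) (l : ℕ)
    (hlen : invCount w < invCount (simpleT n i h * w))
    (h1 : (w⁻¹ ⟨i, Nat.lt_of_succ_lt h⟩ : ℕ) < l) (h2 : l ≤ (w⁻¹ ⟨i + 1, h⟩ : ℕ))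
    (j : ℕ) (hj : (wSorted w l).getD j (i + 1) = i) :
    Ai w l i = {a | a ∈ A w l ∧ a.getD j (i + 1) = i ∧ (i + 1) ∉ a} :=
  stmt8_general n w i l j hj
end

section
/- Fix a permutation w ∈ S_n, a multiset η = η₁ + 2η₂, and an index l, and let A_l^η(w) := {α ∈ A_l(w) : η₂ ⊆ α ⊆ η₁ ∪ η₂}. If A_l^η(w) is nonempty, then it contains a unique maximum element with respect to the entrywise order, i.e., an element greater than or equal to every other element of the set. -/
/-- `A_l^η(w) = {α ∈ A_l(w) : η₂ ⊆ α ⊆ η₁ ∪ η₂}` where `η = η₁ + 2η₂`. -/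
def Aeta {n : ℕ} (w : Equiv.Perm (Fin n)) (l : ℕ) (η₁ η₂ : Finset ℕ) : Set (List ℕ) :=
  {a | a ∈ A w l ∧ η₂ ⊆ a.toFinset ∧ a.toFinset ⊆ η₁ ∪ η₂}

/-!
`A_l^η(w)` is closed under the entrywise maximum. The only point needing thought is that a common
entry `x = a i = b j` (say `i ≤ j`) of two increasing sequences survives: either `a j = x`, or
`a j > x` and then `b i ≤ b j = x`, so the maximum takes the value `x` at `j` or at `i`.
A sequence of maximal entry sum then dominates every other one, since taking its maximum with
another element cannot increase the sum.
-/

namespace List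

section Sum

variable {M : Type*} [AddCommMonoid M] [PartialOrder M] [IsOrderedCancelAddMonoid M]

theorem Forall₂.eq_of_sum_le {a b : List M} (h : Forall₂ (· ≤ ·) a b) (hsum : b.sum ≤ a.sum) :
    a = b := by
  induction h with
  | nil => rfl
  | @cons x y a b hxy _ ih =>
    rw [sum_cons, sum_cons] at hsum
    have htail : b.sum ≤ a.sum := le_of_add_le_add_left (hsum.trans (add_le_add_left hxy _))
    obtain rfl := ih htail
    rw [le_antisymm hxy (le_of_add_le_add_right hsum)]

end Sum

section ZipWithMax

variable {α : Type*} [LinearOrder α] {a b c : List α}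

theorem forall₂_le_zipWith_max_left (hlen : a.length = b.length) :
    Forall₂ (· ≤ ·) a (zipWith max a b) := by
  rw [forall₂_iff_get]
  exact ⟨by simp [hlen], fun i _ _ => by simp⟩

theorem forall₂_le_zipWith_max_right (hlen : a.length = b.length) :
    Forall₂ (· ≤ ·) b (zipWith max a b) := by
  rw [zipWith_comm]
  simpa only [max_comm] using forall₂_le_zipWith_max_left hlen.symm

theorem Forall₂.zipWith_max_le (ha : Forall₂ (· ≤ ·) a c) (hb : Forall₂ (· ≤ ·) b c) :
    Forall₂ (· ≤ ·) (zipWith max a b) c := by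
  induction ha generalizing b with
  | nil => cases hb; exact .nil
  | cons hx _ ih =>
    cases hb with
    | cons hy htail => exact .cons (max_le hx hy) (ih htail)

theorem SortedLT.zipWith_max (ha : a.SortedLT) (hb : b.SortedLT) :
    (zipWith max a b).SortedLT :=
  sortedLT_of_getElem_lt_getElem_of_lt fun _ _ _ _ hij => by
    simpa only [getElem_zipWith] using
      max_lt_max (ha.getElem_lt_getElem_of_lt hij) (hb.getElem_lt_getElem_of_lt hij)

theorem mem_or_mem_of_mem_zipWith_max {x : α} (hx : x ∈ zipWith max a b) : x ∈ a ∨ x ∈ b := by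
  obtain ⟨i, hi, rfl⟩ := mem_iff_getElem.mp hx
  rw [length_zipWith] at hi
  rw [getElem_zipWith]
  rcases max_choice a[i] b[i] with h | h <;> rw [h]
  · exact .inl (getElem_mem _)
  · exact .inr (getElem_mem _)

theorem SortedLT.getElem_mem_zipWith_max_of_le (ha : a.SortedLT) (hb : b.SortedLT)
    (hlen : a.length = b.length) {i j : ℕ} (hi : i < a.length) (hj : j < b.length) (hij : i ≤ j)
    (heq : a[i] = b[j]) : a[i] ∈ zipWith max a b := by
  have hmem : ∀ k (hk : k < a.length), max a[k] (b[k]'(hlen ▸ hk)) = a[i] →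
      a[i] ∈ zipWith max a b := fun k hk hk' =>
    mem_iff_getElem.mpr ⟨k, by simpa [hlen] using hk, by rw [getElem_zipWith, hk']⟩
  rcases (ha.getElem_le_getElem_iff.mpr hij : a[i] ≤ a[j]).eq_or_lt with ha_eq | ha_lt
  · exact hmem j (hlen ▸ hj) (by rw [← ha_eq, heq, max_self])
  · have hbi : b[i] ≤ a[i] := heq ▸ hb.getElem_le_getElem_iff.mpr hij
    exact hmem i hi (max_eq_left hbi)

theorem SortedLT.mem_zipWith_max (ha : a.SortedLT) (hb : b.SortedLT) (hlen : a.length = b.length)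
    {x : α} (hxa : x ∈ a) (hxb : x ∈ b) : x ∈ zipWith max a b := by
  obtain ⟨i, hi, rfl⟩ := mem_iff_getElem.mp hxa
  obtain ⟨j, hj, heq⟩ := mem_iff_getElem.mp hxb
  rcases le_total i j with hij | hji
  · exact ha.getElem_mem_zipWith_max_of_le hb hlen hi hj hij heq.symm
  · rw [zipWith_comm, ← heq]
    simpa only [max_comm] using hb.getElem_mem_zipWith_max_of_le ha hlen.symm hj hi hji heq

end ZipWithMax

theorem exists_unique_greatest_of_zipWith_max_mem {S : Set (List ℕ)} {W : List ℕ}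
    (hne : S.Nonempty) (hbound : ∀ a ∈ S, Forall₂ (· ≤ ·) a W)
    (hmax : ∀ a ∈ S, ∀ b ∈ S, zipWith max a b ∈ S) :
    ∃! m, m ∈ S ∧ ∀ a ∈ S, Forall₂ (· ≤ ·) a m := by
  have hbdd : BddAbove (sum '' S) :=
    ⟨W.sum, by rintro _ ⟨a, ha, rfl⟩; exact (hbound a ha).sum_le_sum⟩
  obtain ⟨m, hm, hmsum⟩ := Nat.sSup_mem (hne.image sum) hbdd
  have hlen : ∀ a ∈ S, a.length = m.length := fun a ha =>
    (hbound a ha).length_eq.trans (hbound m hm).length_eq.symm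
  have hgreatest : ∀ a ∈ S, Forall₂ (· ≤ ·) a m := by
    intro a ha
    have hm_le : Forall₂ (· ≤ ·) m (zipWith max a m) :=
      forall₂_le_zipWith_max_right (hlen a ha)
    have hsum_le : (zipWith max a m).sum ≤ m.sum :=
      hmsum ▸ le_csSup hbdd ⟨_, hmax a ha m hm, rfl⟩
    rw [hm_le.eq_of_sum_le hsum_le]
    exact forall₂_le_zipWith_max_left (hlen a ha)
  refine ⟨m, ⟨hm, hgreatest⟩, fun m' ⟨hm', hgreatest'⟩ => ?_⟩
  exact (hgreatest m' hm').eq_of_sum_le (hgreatest' m hm).sum_le_sum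

end List

theorem zipWith_max_mem_Aeta {n : ℕ} {w : Equiv.Perm (Fin n)} {l : ℕ} {η₁ η₂ : Finset ℕ}
    {a b : List ℕ} (ha : a ∈ Aeta w l η₁ η₂) (hb : b ∈ Aeta w l η₁ η₂) :
    List.zipWith max a b ∈ Aeta w l η₁ η₂ := by
  obtain ⟨⟨ha_chain, ha_le⟩, ha_sup, ha_sub⟩ := ha
  obtain ⟨⟨hb_chain, hb_le⟩, hb_sup, hb_sub⟩ := hb
  have ha_sorted := List.IsChain.sortedLT ha_chain
  have hb_sorted := List.IsChain.sortedLT hb_chain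
  refine ⟨⟨(ha_sorted.zipWith_max hb_sorted).isChain, ha_le.zipWith_max_le hb_le⟩, ?_, ?_⟩
  · intro x hx
    rw [List.mem_toFinset]
    exact ha_sorted.mem_zipWith_max hb_sorted (ha_le.length_eq.trans hb_le.length_eq.symm)
      (List.mem_toFinset.mp (ha_sup hx)) (List.mem_toFinset.mp (hb_sup hx))
  · intro x hx
    rcases List.mem_or_mem_of_mem_zipWith_max (List.mem_toFinset.mp hx) with hxa | hxb
    · exact ha_sub (List.mem_toFinset.mpr hxa)
    · exact hb_sub (List.mem_toFinset.mpr hxb)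

theorem stmt12_general (n : ℕ) (w : Equiv.Perm (Fin n)) (l : ℕ) (η₁ η₂ : Finset ℕ)
    (hne : (Aeta w l η₁ η₂).Nonempty) :
    ∃! m, m ∈ Aeta w l η₁ η₂ ∧ ∀ a ∈ Aeta w l η₁ η₂, List.Forall₂ (· ≤ ·) a m :=
  List.exists_unique_greatest_of_zipWith_max_mem hne (fun _ ha => ha.1.2)
    fun _ ha _ hb => zipWith_max_mem_Aeta ha hb

/-- A nonempty `A_l^η(w)` contains a unique maximum element. -/
theorem stmt12 (n : ℕ) (w : Equiv.Perm (Fin n)) (l : ℕ) (η₁ η₂ : Finset ℕ)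
    (hd : Disjoint η₁ η₂) (hne : (Aeta w l η₁ η₂).Nonempty) :
    ∃! m, m ∈ Aeta w l η₁ η₂ ∧ ∀ a ∈ Aeta w l η₁ η₂, List.Forall₂ (· ≤ ·) a m :=
  stmt12_general n w l η₁ η₂ hne
end

section
/- Let k ≤ l, w ∈ S_n, and let η be a multiset with |η₁| + 2|η₂| = k + l. Let α_max ∈ A_l^η(w) and β_max ∈ A_k^η(w) be the unique maximal elements of these sets (assumed nonempty), and let β_min be the set complement of α_max in η. Then β_max ⊆ α_max and β_min ∩ β_max = η₂. -/
/-!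
Identify a strictly increasing list with its underlying finset: entrywise comparison of increasing
enumerations becomes the Gale order `#{x ∈ T | x < v} ≤ #{x ∈ S | x < v}` for all `v`. Take
`b ∈ β_max \ α_max` and let `X` be the values of `w^l` missing from `w^k`. Maximality of `β_max`
forbids exchanging `b` in `β_max` for the next element of `α_max \ β_max`, which forces `α_max` to
have more elements below `b` than `β_max` and `X` together; maximality of `α_max` forbids
exchanging the previous element of `α_max \ β_max` for `b`, which forces the opposite inequality.
Hence `β_max ⊆ α_max`, and the second claim is a count of multiplicities in
`α_max + β_min = η₁ + 2 η₂`.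
-/

open Finset

variable {α : Type*} [LinearOrder α]

namespace List

theorem Forall₂.countP_lt_le {a b : List α} (h : Forall₂ (· ≤ ·) a b) (v : α) :
    b.countP (· < v) ≤ a.countP (· < v) := by
  induction h with
  | nil => rfl
  | @cons x y _ _ hxy _ ih =>
    simp only [countP_cons, decide_eq_true_eq]
    by_cases hy : y < v
    · simp [hy, hxy.trans_lt hy, ih]
    · split_ifs <;> omega

theorem Pairwise.getElem_lt_iff {l : List α} (hl : l.Pairwise (· < ·)) {t : ℕ}
    (ht : t < l.length) (v : α) : l[t] < v ↔ t < l.countP (· < v) := by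
  induction l generalizing t with
  | nil => simp at ht
  | cons x xs ih =>
    obtain ⟨hx, hxs⟩ := pairwise_cons.mp hl
    by_cases hxv : x < v
    · cases t with
      | zero => simp [hxv]
      | succ t => simp [hxv, ih hxs (Nat.lt_of_succ_lt_succ ht)]
    · have hzero : xs.countP (· < v) = 0 :=
        countP_eq_zero.mpr fun y hy hyv => hxv ((hx y hy).trans (by simpa using hyv))
      cases t with
      | zero => simp [hxv, hzero]
      | succ t =>
        have := hx _ (getElem_mem (Nat.lt_of_succ_lt_succ ht))
        simp only [getElem_cons_succ, countP_cons, hzero, decide_eq_true_eq, hxv, if_false]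
        constructor
        · intro h; exact absurd (this.trans h) hxv
        · omega

theorem Pairwise.forall₂_le_iff {a b : List α} (ha : a.Pairwise (· < ·))
    (hb : b.Pairwise (· < ·)) :
    Forall₂ (· ≤ ·) a b ↔ a.length = b.length ∧ ∀ v, b.countP (· < v) ≤ a.countP (· < v) := by
  refine ⟨fun h => ⟨h.length_eq, h.countP_lt_le⟩, fun ⟨hlen, hcount⟩ => ?_⟩
  refine forall₂_iff_get.mpr ⟨hlen, fun i h₁ h₂ => ?_⟩
  by_contra! hlt
  simp only [get_eq_getElem] at hlt
  have hb_lt := (hb.getElem_lt_iff h₂ a[i]).mp hlt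
  exact lt_irrefl _ ((ha.getElem_lt_iff h₁ a[i]).mpr (hb_lt.trans_le (hcount _)))

end List

namespace Finset

def countBelow (S : Finset α) (v : α) : ℕ := #{x ∈ S | x < v}

/-- The Gale order: `GaleLE S T` iff the increasing enumeration of `S` is bounded entrywise by
that of `T` (`List.Pairwise.forall₂_le_iff_galeLE`). -/
def GaleLE (S T : Finset α) : Prop := #S = #T ∧ ∀ v, countBelow T v ≤ countBelow S v

def admissible (W η₁ η₂ : Finset α) : Set (Finset α) :=
  {S | GaleLE S W ∧ η₂ ⊆ S ∧ S ⊆ η₁ ∪ η₂}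

theorem countBelow_mono (S : Finset α) {u v : α} (h : u ≤ v) : countBelow S u ≤ countBelow S v :=
  card_le_card (monotone_filter_right S fun _ _ hx => hx.trans_le h)

theorem countBelow_le_card (S : Finset α) (v : α) : countBelow S v ≤ #S := card_filter_le _ _

theorem countBelow_add_card_filter_Ico (S : Finset α) {u v : α} (h : u ≤ v) :
    countBelow S u + #{x ∈ S | u ≤ x ∧ x < v} = countBelow S v := by
  rw [countBelow, countBelow, ← card_filter_add_card_filter_not (s := {x ∈ S | x < v}) (· < u),
    filter_filter, filter_filter]
  congr 2
  · ext x; simp only [mem_filter]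
    exact ⟨fun hx => ⟨hx.1, hx.2.trans_le h, hx.2⟩, fun hx => ⟨hx.1, hx.2.2⟩⟩
  · ext x; simp only [mem_filter, not_lt]; tauto

theorem countBelow_add_le_of_forall_mem {S T : Finset α} {u v : α} (huv : u ≤ v)
    (h : ∀ x ∈ S, u ≤ x → x < v → x ∈ T) :
    countBelow S v + countBelow T u ≤ countBelow T v + countBelow S u := by
  have hsub : {x ∈ S | u ≤ x ∧ x < v} ⊆ {x ∈ T | u ≤ x ∧ x < v} := fun x hx => by
    simp only [mem_filter] at hx ⊢
    exact ⟨h x hx.1 hx.2.1 hx.2.2, hx.2⟩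
  have := card_le_card hsub
  have := countBelow_add_card_filter_Ico S huv
  have := countBelow_add_card_filter_Ico T huv
  omega

theorem countBelow_add_lt_of_forall_mem {S T : Finset α} {u v : α} (huv : u ≤ v)
    (h : ∀ x ∈ S, u ≤ x → x < v → x ∈ T) {b : α} (hbT : b ∈ T) (hbS : b ∉ S) (hub : u ≤ b)
    (hbv : b < v) : countBelow S v + countBelow T u < countBelow T v + countBelow S u := by
  have hssub : {x ∈ S | u ≤ x ∧ x < v} ⊂ {x ∈ T | u ≤ x ∧ x < v} := by
    refine ssubset_iff_of_subset (fun x hx => ?_) |>.mpr ⟨b, by simp [hbT, hub, hbv], by simp [hbS]⟩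
    simp only [mem_filter] at hx ⊢
    exact ⟨h x hx.1 hx.2.1 hx.2.2, hx.2⟩
  have := card_lt_card hssub
  have := countBelow_add_card_filter_Ico S huv
  have := countBelow_add_card_filter_Ico T huv
  omega

theorem countBelow_sdiff_add {F G : Finset α} (h : F ⊆ G) (v : α) :
    countBelow (G \ F) v + countBelow F v = countBelow G v := by
  conv_rhs => rw [countBelow, ← sdiff_union_of_subset h, filter_union,
    card_union_of_disjoint (disjoint_filter_filter sdiff_disjoint)]
  rfl

theorem countBelow_insert_erase {S : Finset α} {x y : α} (hx : x ∈ S) (hy : y ∉ S) (hxy : x < y)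
    (v : α) :
    countBelow (insert y (S.erase x)) v + (if x < v ∧ v ≤ y then 1 else 0) = countBelow S v := by
  have hx' : y ∉ {z ∈ S.erase x | z < v} := fun h => hy (mem_of_mem_erase (mem_filter.mp h).1)
  rw [countBelow, countBelow, filter_insert, filter_erase]
  by_cases hyv : y < v
  · have hxv := hxy.trans hyv
    rw [if_pos hyv, card_insert_of_notMem (by rwa [← filter_erase]), if_neg (by simp [hyv.not_ge]),
      card_erase_add_one (mem_filter.mpr ⟨hx, hxv⟩)]
  · rw [if_neg hyv]
    by_cases hxv : x < v
    · rw [if_pos ⟨hxv, not_lt.mp hyv⟩, card_erase_add_one (mem_filter.mpr ⟨hx, hxv⟩)]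
    · rw [if_neg (fun h => hxv h.1), add_zero,
        erase_eq_of_notMem (s := {z ∈ S | z < v}) fun h => hxv (mem_filter.mp h).2]

end Finset

theorem List.Nodup.countP_lt_eq_countBelow {l : List α} (hl : l.Nodup) (v : α) :
    l.countP (· < v) = countBelow l.toFinset v := by
  rw [countBelow, countP_eq_length_filter, ← toFinset_card_of_nodup (hl.filter _), toFinset_filter]
  simp only [decide_eq_true_eq]

theorem List.Pairwise.forall₂_le_iff_galeLE {a b : List α} (ha : a.Pairwise (· < ·))
    (hb : b.Pairwise (· < ·)) : Forall₂ (· ≤ ·) a b ↔ GaleLE a.toFinset b.toFinset := by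
  simp only [ha.forall₂_le_iff hb, GaleLE, List.toFinset_card_of_nodup ha.nodup,
    List.toFinset_card_of_nodup hb.nodup, ha.nodup.countP_lt_eq_countBelow,
    hb.nodup.countP_lt_eq_countBelow]

namespace Finset

theorem pairwise_sort_lt (S : Finset α) : (S.sort (· ≤ ·)).Pairwise (· < ·) :=
  (sortedLT_sort S).pairwise

variable {W F G S T η₁ η₂ : Finset α}

/-- Exchanging `x ∈ S` for a larger `y ∉ S` strictly raises `S` in the Gale order, so at a maximal
`S` the exchange must break the bound by `W` somewhere in `(x, y]`. -/
theorem exists_countBelow_le_of_isMax (hS : S ∈ admissible W η₁ η₂)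
    (hmax : ∀ R ∈ admissible W η₁ η₂, GaleLE R S) {x y : α} (hx : x ∈ S) (hx₂ : x ∉ η₂)
    (hy : y ∉ S) (hy₁₂ : y ∈ η₁ ∪ η₂) (hxy : x < y) :
    ∃ v, x < v ∧ v ≤ y ∧ countBelow S v ≤ countBelow W v := by
  by_contra! htight
  obtain ⟨⟨hcard, hle⟩, h₂S, hS₁₂⟩ := hS
  have hcount := countBelow_insert_erase hx hy hxy
  have hR : insert y (S.erase x) ∈ admissible W η₁ η₂ := by
    refine ⟨⟨?_, fun v => ?_⟩, fun z hz => ?_, fun z hz => ?_⟩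
    · rw [card_insert_of_notMem (fun h => hy (mem_of_mem_erase h)), card_erase_add_one hx, hcard]
    · have := hcount v
      have := hle v
      split_ifs at * with hv
      · have := htight v hv.1 hv.2
        omega
      · omega
    · exact mem_insert_of_mem (mem_erase.mpr ⟨fun h => hx₂ (h ▸ hz), h₂S hz⟩)
    · rcases mem_insert.mp hz with rfl | hz
      · exact hy₁₂
      · exact hS₁₂ (mem_of_mem_erase hz)
  have := (hmax _ hR).2 y
  have := hcount y
  rw [if_pos ⟨hxy, le_rfl⟩] at this
  omega

/-- Otherwise the least `a ∈ S \ T` above `b` could replace `b` in `T`. -/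
theorem countBelow_lt_of_isMax_of_mem_sdiff (hFG : F ⊆ G) (hS : S ∈ admissible G η₁ η₂)
    (hT : T ∈ admissible F η₁ η₂) (hTmax : ∀ R ∈ admissible F η₁ η₂, GaleLE R T)
    {b : α} (hbT : b ∈ T) (hbS : b ∉ S) :
    countBelow T b + countBelow (G \ F) b < countBelow S b := by
  by_contra! hdense
  have hsplit := countBelow_sdiff_add hFG
  have hexists : ∃ a ∈ S, a ∉ T ∧ b < a := by
    by_contra! hnone
    have hssub : {x ∈ S | ¬ x < b} ⊂ {x ∈ T | ¬ x < b} := by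
      refine ssubset_iff_of_subset (fun x hx => ?_) |>.mpr ⟨b, by simp [hbT], by simp [hbS]⟩
      obtain ⟨hxS, hbx⟩ := mem_filter.mp hx
      exact mem_filter.mpr ⟨by_contra fun hxT => (hnone x hxS hxT).not_gt
        (lt_of_le_of_ne (not_lt.mp hbx) fun h => hbS (h ▸ hxS)), hbx⟩
    have := card_lt_card hssub
    have := card_filter_add_card_filter_not (s := S) (· < b)
    have := card_filter_add_card_filter_not (s := T) (· < b)
    have := countBelow_le_card (G \ F) b
    have := card_sdiff_add_card_eq_card hFG
    have := hS.1.1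
    have := hT.1.1
    simp only [countBelow] at *
    omega
  obtain ⟨a, ha, hamin⟩ := exists_min_image {x ∈ S \ T | b < x} id
    (by simpa [Finset.Nonempty, and_assoc] using hexists)
  obtain ⟨⟨haS, haT⟩, hba⟩ := by simpa only [mem_filter, mem_sdiff] using ha
  obtain ⟨v, hbv, hva, hvT⟩ := exists_countBelow_le_of_isMax hT hTmax hbT
    (fun h => hbS (hS.2.1 h)) haT (hS.2.2 haS) hba
  have hgap := countBelow_add_lt_of_forall_mem hbv.le (fun x hxS hbx hxv => by_contra fun hxT =>
    (hamin x (by simp [hxS, hxT, lt_of_le_of_ne hbx fun h => hbS (h ▸ hxS)])).not_gt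
      (hxv.trans_le hva)) hbT hbS le_rfl hbv
  have := hS.1.2 v
  have := hsplit v
  have := countBelow_mono (G \ F) hbv.le
  omega

/-- Otherwise `b` could replace the largest `s ∈ S \ T` below it in `S`. -/
theorem countBelow_le_of_isMax_of_mem_sdiff (hFG : F ⊆ G) (hS : S ∈ admissible G η₁ η₂)
    (hSmax : ∀ R ∈ admissible G η₁ η₂, GaleLE R S) (hT : T ∈ admissible F η₁ η₂)
    {b : α} (hbT : b ∈ T) (hbS : b ∉ S) :
    countBelow S b ≤ countBelow T b + countBelow (G \ F) b := by
  by_contra! hsparse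
  have hexists : ∃ s ∈ S, s ∉ T ∧ s < b := by
    by_contra! hnone
    have : countBelow S b ≤ countBelow T b := card_le_card fun x hx => by
      obtain ⟨hxS, hxb⟩ := mem_filter.mp hx
      exact mem_filter.mpr ⟨by_contra fun hxT => (hnone x hxS hxT).not_gt hxb, hxb⟩
    omega
  obtain ⟨s, hs, hsmax⟩ := exists_max_image {x ∈ S \ T | x < b} id
    (by simpa [Finset.Nonempty, and_assoc] using hexists)
  obtain ⟨⟨hsS, hsT⟩, hsb⟩ := by simpa only [mem_filter, mem_sdiff] using hs
  obtain ⟨v, hsv, hvb, hvS⟩ := exists_countBelow_le_of_isMax hS hSmax hsS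
    (fun h => hsT (hT.2.1 h)) hbS (hT.2.2 hbT) hsb
  have hgap := countBelow_add_le_of_forall_mem (S := S) (T := T) hvb fun x hxS hvx hxb =>
    by_contra fun hxT => (hsmax x (by simp [hxS, hxT, hxb])).not_gt (hsv.trans_le hvx)
  have := hT.1.2 v
  have := countBelow_sdiff_add hFG v
  have := countBelow_mono (G \ F) hvb
  omega

theorem subset_of_isMax (hFG : F ⊆ G) (hS : S ∈ admissible G η₁ η₂)
    (hSmax : ∀ R ∈ admissible G η₁ η₂, GaleLE R S) (hT : T ∈ admissible F η₁ η₂)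
    (hTmax : ∀ R ∈ admissible F η₁ η₂, GaleLE R T) : T ⊆ S := fun _ hbT => by_contra fun hbS =>
  (countBelow_le_of_isMax_of_mem_sdiff hFG hS hSmax hT hbT hbS).not_gt
    (countBelow_lt_of_isMax_of_mem_sdiff hFG hS hT hTmax hbT hbS)

end Finset

theorem firstVals_mono {n : ℕ} (w : Equiv.Perm (Fin n)) {k l : ℕ} (hkl : k ≤ l) :
    firstVals w k ⊆ firstVals w l :=
  image_subset_image (monotone_filter_right _ fun _ _ hj => hj.trans_le hkl)

theorem mem_Aeta_iff {n : ℕ} {w : Equiv.Perm (Fin n)} {l : ℕ} {η₁ η₂ : Finset ℕ} {a : List ℕ} :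
    a ∈ Aeta w l η₁ η₂ ↔ a.Pairwise (· < ·) ∧ a.toFinset ∈ admissible (firstVals w l) η₁ η₂ := by
  have hW : wSorted w l = (firstVals w l).sort (· ≤ ·) := rfl
  constructor
  · rintro ⟨⟨hchain, hle⟩, h₂⟩
    have ha := List.isChain_iff_pairwise.mp hchain
    rw [hW, ha.forall₂_le_iff_galeLE (pairwise_sort_lt _), sort_toFinset] at hle
    exact ⟨ha, hle, h₂⟩
  · rintro ⟨ha, hle, h₂⟩
    rw [← sort_toFinset (firstVals w l) (· ≤ ·), ← ha.forall₂_le_iff_galeLE (pairwise_sort_lt _)]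
      at hle
    exact ⟨⟨List.isChain_iff_pairwise.mpr ha, hle⟩, h₂⟩

theorem galeLE_of_forall_mem_Aeta {n : ℕ} {w : Equiv.Perm (Fin n)} {l : ℕ} {η₁ η₂ : Finset ℕ}
    {amax : List ℕ} (hs : amax.Pairwise (· < ·))
    (hmax : ∀ a ∈ Aeta w l η₁ η₂, List.Forall₂ (· ≤ ·) a amax) :
    ∀ R ∈ admissible (firstVals w l) η₁ η₂, GaleLE R amax.toFinset := by
  intro R hR
  have hsort := pairwise_sort_lt R
  have := hmax _ (mem_Aeta_iff.mpr ⟨hsort, by rwa [sort_toFinset]⟩)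
  rwa [hsort.forall₂_le_iff_galeLE hs, sort_toFinset] at this

theorem Finset.inter_eq_of_val_add_eq {S T U η₁ η₂ : Finset α} (hTS : T ⊆ S) (h₂T : η₂ ⊆ T)
    (h : S.val + U.val = η₁.val + 2 • η₂.val) : U ∩ T = η₂ := by
  ext x
  have hx := congrArg (Multiset.count x) h
  simp only [Multiset.count_add, Multiset.count_nsmul, Multiset.count_eq_of_nodup (nodup _),
    mem_val] at hx
  have := @hTS x
  have := @h₂T x
  rw [mem_inter]
  split_ifs at hx <;> first | omega | tauto

theorem stmt13_general (n : ℕ) (w : Equiv.Perm (Fin n)) (k l : ℕ) (hkl : k ≤ l)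
    (η₁ η₂ : Finset ℕ)
    (amax : List ℕ) (ham : amax ∈ Aeta w l η₁ η₂)
    (hamax : ∀ a ∈ Aeta w l η₁ η₂, List.Forall₂ (· ≤ ·) a amax)
    (bmax : List ℕ) (hbm : bmax ∈ Aeta w k η₁ η₂)
    (hbmax : ∀ b ∈ Aeta w k η₁ η₂, List.Forall₂ (· ≤ ·) b bmax)
    (bmin : Finset ℕ)
    (hbmin : (↑amax : Multiset ℕ) + bmin.val = η₁.val + 2 • η₂.val) :
    bmax.toFinset ⊆ amax.toFinset ∧ bmin ∩ bmax.toFinset = η₂ := by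
  obtain ⟨hsa, ha⟩ := mem_Aeta_iff.mp ham
  obtain ⟨hsb, hb⟩ := mem_Aeta_iff.mp hbm
  have hsub : bmax.toFinset ⊆ amax.toFinset := subset_of_isMax (firstVals_mono w hkl) ha
    (galeLE_of_forall_mem_Aeta hsa hamax) hb (galeLE_of_forall_mem_Aeta hsb hbmax)
  have hval : amax.toFinset.val = amax := by rw [List.toFinset_val, hsa.nodup.dedup]
  exact ⟨hsub, inter_eq_of_val_add_eq hsub hb.2.1 (by rwa [← hval] at hbmin)⟩

/-- `β_max ⊆ α_max` and `β_min ∩ β_max = η₂`. -/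
theorem stmt13 (n : ℕ) (w : Equiv.Perm (Fin n)) (k l : ℕ) (hkl : k ≤ l)
    (η₁ η₂ : Finset ℕ) (hd : Disjoint η₁ η₂)
    (hc : η₁.card + 2 * η₂.card = k + l)
    (amax : List ℕ) (ham : amax ∈ Aeta w l η₁ η₂)
    (hamax : ∀ a ∈ Aeta w l η₁ η₂, List.Forall₂ (· ≤ ·) a amax)
    (bmax : List ℕ) (hbm : bmax ∈ Aeta w k η₁ η₂)
    (hbmax : ∀ b ∈ Aeta w k η₁ η₂, List.Forall₂ (· ≤ ·) b bmax)
    (bmin : Finset ℕ)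
    (hbmin : (↑amax : Multiset ℕ) + bmin.val = η₁.val + 2 • η₂.val) :
    bmax.toFinset ⊆ amax.toFinset ∧ bmin ∩ bmax.toFinset = η₂ :=
  stmt13_general n w k l hkl η₁ η₂ amax ham hamax bmax hbm hbmax bmin hbmin
end

section
/- Let k ≤ l, w ∈ S_n, and η a multiset with |η₁| + 2|η₂| = k + l. Let α_max be the maximal element of A_l^η(w), β_min its complement in η, β_max the maximal element of A_k^η(w), and α_min its complement in η. Then the following are equivalent: β_min ∈ A_k(w); α_min ∈ A_l(w); η can be written as α + β for some α ∈ A_l(w) and β ∈ A_k(w). -/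
namespace List

variable {α : Type*}

theorem Forall₂.le_trans [Preorder α] {a b c : List α} (hab : Forall₂ (· ≤ ·) a b)
    (hbc : Forall₂ (· ≤ ·) b c) : Forall₂ (· ≤ ·) a c := by
  induction hab generalizing c with
  | nil => cases hbc; exact .nil
  | cons h _ ih =>
    cases hbc with
    | cons h' hbc => exact .cons (h.trans h') (ih hbc)

variable [LinearOrder α]

theorem Forall₂.countP_right_le_countP_left {a b : List α} (h : Forall₂ (· ≤ ·) a b)
    (x : α) : b.countP (· ≤ x) ≤ a.countP (· ≤ x) := by
  induction h with
  | nil => rfl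
  | @cons a₀ b₀ _ _ hab _ ih =>
    by_cases hb : b₀ ≤ x
    · simp [hb, hab.trans hb, ih]
    · simp only [countP_cons, hb, decide_false, Bool.false_eq_true, if_false]
      split <;> omega

theorem forall₂_le_of_countP_le_s14 :
    ∀ {a b : List α}, a.Pairwise (· ≤ ·) → b.Pairwise (· ≤ ·) → a.length = b.length →
      (∀ x, b.countP (· ≤ x) ≤ a.countP (· ≤ x)) → Forall₂ (· ≤ ·) a b
  | [], [], _, _, _, _ => .nil
  | a₀ :: a, b₀ :: b, ha, hb, hlen, hcount => by
    have hab : a₀ ≤ b₀ := by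
      by_contra! hlt
      have hge : ∀ y ∈ a₀ :: a, a₀ ≤ y :=
        forall_mem_cons.2 ⟨le_rfl, (pairwise_cons.1 ha).1⟩
      have : (a₀ :: a).countP (· ≤ b₀) = 0 :=
        countP_eq_zero.2 fun y hy => by simpa using hlt.trans_le (hge y hy)
      simpa [this] using hcount b₀
    refine .cons hab (forall₂_le_of_countP_le_s14 ha.of_cons hb.of_cons (by simpa using hlen)
      fun x => ?_)
    by_cases hx : b₀ ≤ x
    · simpa [countP_cons, hx, hab.trans hx] using hcount x
    · have : b.countP (· ≤ x) = 0 :=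
        countP_eq_zero.2 fun y hy => by
          simpa using (not_le.1 hx).trans_le (rel_of_pairwise_cons hb hy)
      omega

end List

namespace Multiset

variable {α : Type*} [LinearOrder α]

open List in
theorem forall₂_sort_le_iff {s t : Multiset α} (h : card s = card t) :
    Forall₂ (· ≤ ·) (s.sort (· ≤ ·)) (t.sort (· ≤ ·)) ↔
      ∀ x, t.countP (· ≤ x) ≤ s.countP (· ≤ x) := by
  have hcount (u : Multiset α) (x : α) :
      (u.sort (· ≤ ·)).countP (· ≤ x) = u.countP (· ≤ x) := by
    conv_rhs => rw [← sort_eq u (· ≤ ·)]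
    rw [coe_countP]
  refine ⟨fun hle x => ?_, fun hle => forall₂_le_of_countP_le_s14 (pairwise_sort _ _)
    (pairwise_sort _ _) (by simpa using h) fun x => ?_⟩
  · simpa [hcount] using hle.countP_right_le_countP_left x
  · simpa [hcount] using hle x

theorem forall₂_sort_le_of_add_eq {s t s' t' : Multiset α} (hsum : s + t = s' + t')
    (hcard : card s = card s')
    (h : List.Forall₂ (· ≤ ·) (s.sort (· ≤ ·)) (s'.sort (· ≤ ·))) :
    List.Forall₂ (· ≤ ·) (t'.sort (· ≤ ·)) (t.sort (· ≤ ·)) := by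
  have hcard' : card t' = card t := by
    have := congrArg card hsum
    simp only [card_add] at this
    omega
  rw [forall₂_sort_le_iff hcard] at h
  refine (forall₂_sort_le_iff hcard').2 fun x => ?_
  have := congrArg (countP (· ≤ x)) hsum
  simp only [countP_add] at this
  linarith [h x]

theorem sort_coe_of_isChain {l : List α} (h : l.IsChain (· < ·)) :
    (l : Multiset α).sort (· ≤ ·) = l :=
  List.mergeSort_eq_self (· ≤ ·) ((List.isChain_iff_pairwise.1 h).imp le_of_lt)

end Multiset

section

variable {n : ℕ} {w : Equiv.Perm (Fin n)} {k l : ℕ} {η₁ η₂ : Finset ℕ}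

theorem mem_Aeta_of_add_eq {a b : List ℕ} (ha : a ∈ A w l) (hb : b.Nodup)
    (hab : (↑a + ↑b : Multiset ℕ) = η₁.val + 2 • η₂.val) : a ∈ Aeta w l η₁ η₂ := by
  refine ⟨ha, fun e he => ?_, fun e he => ?_⟩
  · have hcount := congrArg (Multiset.count e) hab
    have h₂ := Multiset.count_eq_one_of_mem η₂.nodup he
    have hb₁ := Multiset.nodup_iff_count_le_one.1 (Multiset.coe_nodup.2 hb) e
    simp only [Multiset.count_add, Multiset.count_nsmul, h₂] at hcount
    rw [List.mem_toFinset, ← Multiset.mem_coe, ← Multiset.count_pos]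
    omega
  · have : e ∈ η₁.val + 2 • η₂.val :=
      hab ▸ Multiset.mem_add.2 (.inl (List.mem_toFinset.1 he))
    simpa [Multiset.mem_nsmul] using this

theorem sort_mem_A_iff_exists_add_eq {amax : List ℕ} (ham : amax ∈ A w l)
    (hamax : ∀ a ∈ Aeta w l η₁ η₂, List.Forall₂ (· ≤ ·) a amax) {bmin : Finset ℕ}
    (hbmin : (↑amax : Multiset ℕ) + bmin.val = η₁.val + 2 • η₂.val) :
    bmin.sort (· ≤ ·) ∈ A w k ↔
      ∃ a ∈ A w l, ∃ b ∈ A w k, (↑a + ↑b : Multiset ℕ) = η₁.val + 2 • η₂.val := by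
  refine ⟨fun h => ⟨amax, ham, _, h, by rwa [Finset.sort_eq]⟩, ?_⟩
  rintro ⟨a, ha, b, hb, hab⟩
  have hb_nodup : b.Nodup := (List.isChain_iff_pairwise.1 hb.1).imp ne_of_lt
  have ha_le : List.Forall₂ (· ≤ ·) a amax := hamax a (mem_Aeta_of_add_eq ha hb_nodup hab)
  have hbmin_le : List.Forall₂ (· ≤ ·) (bmin.sort (· ≤ ·)) b := by
    have := Multiset.forall₂_sort_le_of_add_eq (hab.trans hbmin.symm)
      (by simp [ha.2.length_eq, ham.2.length_eq])
      (by rwa [Multiset.sort_coe_of_isChain ha.1, Multiset.sort_coe_of_isChain ham.1])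
    rwa [Multiset.sort_coe_of_isChain hb.1, Finset.sort_val] at this
  exact ⟨(Finset.sortedLT_sort bmin).isChain, hbmin_le.le_trans hb.2⟩

end

theorem stmt14_general (n : ℕ) (w : Equiv.Perm (Fin n)) (k l : ℕ)
    (η₁ η₂ : Finset ℕ)
    (amax : List ℕ) (ham : amax ∈ Aeta w l η₁ η₂)
    (hamax : ∀ a ∈ Aeta w l η₁ η₂, List.Forall₂ (· ≤ ·) a amax)
    (bmax : List ℕ) (hbm : bmax ∈ Aeta w k η₁ η₂)
    (hbmax : ∀ b ∈ Aeta w k η₁ η₂, List.Forall₂ (· ≤ ·) b bmax)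
    (bmin : Finset ℕ)
    (hbmin : (↑amax : Multiset ℕ) + bmin.val = η₁.val + 2 • η₂.val)
    (amin : Finset ℕ)
    (hamin : (↑bmax : Multiset ℕ) + amin.val = η₁.val + 2 • η₂.val) :
    List.TFAE [
      bmin.sort (· ≤ ·) ∈ A w k,
      amin.sort (· ≤ ·) ∈ A w l,
      ∃ a ∈ A w l, ∃ b ∈ A w k, (↑a + ↑b : Multiset ℕ) = η₁.val + 2 • η₂.val] := by
  tfae_have 1 ↔ 3 := sort_mem_A_iff_exists_add_eq ham.1 hamax hbmin
  tfae_have 2 ↔ 3 := by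
    rw [sort_mem_A_iff_exists_add_eq hbm.1 hbmax hamin]
    exact ⟨fun ⟨b, hb, a, ha, h⟩ => ⟨a, ha, b, hb, add_comm (b : Multiset ℕ) a ▸ h⟩,
      fun ⟨a, ha, b, hb, h⟩ => ⟨b, hb, a, ha, add_comm (a : Multiset ℕ) b ▸ h⟩⟩
  tfae_finish

/-- `β_min ∈ A_k(w)` iff `α_min ∈ A_l(w)` iff `η ∈ B̃_{k,l}(w)`. -/
theorem stmt14 (n : ℕ) (w : Equiv.Perm (Fin n)) (k l : ℕ) (hkl : k ≤ l)
    (η₁ η₂ : Finset ℕ) (hd : Disjoint η₁ η₂)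
    (hc : η₁.card + 2 * η₂.card = k + l)
    (amax : List ℕ) (ham : amax ∈ Aeta w l η₁ η₂)
    (hamax : ∀ a ∈ Aeta w l η₁ η₂, List.Forall₂ (· ≤ ·) a amax)
    (bmax : List ℕ) (hbm : bmax ∈ Aeta w k η₁ η₂)
    (hbmax : ∀ b ∈ Aeta w k η₁ η₂, List.Forall₂ (· ≤ ·) b bmax)
    (bmin : Finset ℕ)
    (hbmin : (↑amax : Multiset ℕ) + bmin.val = η₁.val + 2 • η₂.val)
    (amin : Finset ℕ)
    (hamin : (↑bmax : Multiset ℕ) + amin.val = η₁.val + 2 • η₂.val) :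
    List.TFAE [
      bmin.sort (· ≤ ·) ∈ A w k,
      amin.sort (· ≤ ·) ∈ A w l,
      ∃ a ∈ A w l, ∃ b ∈ A w k, (↑a + ↑b : Multiset ℕ) = η₁.val + 2 • η₂.val] :=
  stmt14_general n w k l η₁ η₂ amax ham hamax bmax hbm hbmax bmin hbmin amin hamin
end

section
/- Suppose ℓ(s_i w) > ℓ(w). Then B̃_{k,l}(s_i w) is exactly the union of: B̃_{k,l}(w), the set of s_i-images of elements of B̃_{k,l}(w), and the set of multiset sums α + s_i·β with α ∈ A_{l,i}(w) and β ∈ A_{k,i}(w). Moreover B̃_{k,l}(s_i w) is invariant under the action of s_i on multisets. -/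
/-- `B̃_{k,l}(w)`: multisets expressible as `α + β` with `α ∈ A_l(w)`, `β ∈ A_k(w)`. -/
def Btil {n : ℕ} (w : Equiv.Perm (Fin n)) (k l : ℕ) : Set (Multiset ℕ) :=
  {η | ∃ a ∈ A w l, ∃ b ∈ A w k, (↑a + ↑b : Multiset ℕ) = η}

namespace Bruhat

def geCount (t : ℕ) (a : List ℕ) : ℕ := a.countP (t ≤ ·)

def GaleLE (a b : List ℕ) : Prop := a.length = b.length ∧ ∀ t, geCount t a ≤ geCount t b

lemma geCount_eq_geCount_succ_add_count (t : ℕ) (a : List ℕ) :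
    geCount t a = geCount (t + 1) a + a.count t := by
  induction a with
  | nil => rfl
  | cons x a ih =>
    simp only [geCount, List.countP_cons, List.count_cons, beq_iff_eq, decide_eq_true_eq] at ih ⊢
    split_ifs <;> omega

lemma geCount_eq_length {t : ℕ} {a : List ℕ} : geCount t a = a.length ↔ ∀ x ∈ a, t ≤ x := by
  simp [geCount, List.countP_eq_length]

lemma geCount_le_length (t : ℕ) (a : List ℕ) : geCount t a ≤ a.length :=
  List.countP_le_length

lemma galeLE_of_forall₂ {a b : List ℕ} (h : List.Forall₂ (· ≤ ·) a b) : GaleLE a b := by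
  refine ⟨h.length_eq, fun t => ?_⟩
  induction h with
  | nil => rfl
  | @cons x y a b hxy _ ih =>
    simp only [geCount, List.countP_cons, decide_eq_true_eq] at ih ⊢
    split_ifs <;> omega

lemma forall₂_of_galeLE {a b : List ℕ} (ha : a.Pairwise (· ≤ ·)) (hb : b.Pairwise (· ≤ ·))
    (h : GaleLE a b) : List.Forall₂ (· ≤ ·) a b := by
  induction a generalizing b with
  | nil => cases b with
    | nil => exact .nil
    | cons => simp [GaleLE] at h
  | cons x a ih =>
    cases b with
    | nil => simp [GaleLE] at h
    | cons y b =>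
      obtain ⟨hlen, hcount⟩ := h
      rw [List.pairwise_cons] at ha hb
      have hlen' : a.length = b.length := by simpa using hlen
      have hxb : ∀ z ∈ y :: b, x ≤ z := by
        have hxa : geCount x (x :: a) = (x :: a).length :=
          geCount_eq_length.mpr (by simpa using ha.1)
        rw [← geCount_eq_length]
        have := hcount x
        have := geCount_le_length x (y :: b)
        omega
      have hxy : x ≤ y := hxb y (by simp)
      refine .cons hxy (ih ha.2 hb.2 ⟨hlen', fun t => ?_⟩)
      by_cases hty : t ≤ y
      · have : geCount t b = b.length :=
          geCount_eq_length.mpr fun z hz => hty.trans (hb.1 z hz)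
        have := geCount_le_length t a
        omega
      · have htx : ¬ t ≤ x := fun htx => hty (htx.trans hxy)
        simpa [geCount, List.countP_cons, hty, htx] using hcount t

lemma forall₂_le_iff_galeLE {a b : List ℕ} (ha : a.Pairwise (· ≤ ·)) (hb : b.Pairwise (· ≤ ·)) :
    List.Forall₂ (· ≤ ·) a b ↔ GaleLE a b :=
  ⟨galeLE_of_forall₂, forall₂_of_galeLE ha hb⟩

lemma geCount_split (i : ℕ) (a : List ℕ) :
    geCount (i + 1) a = geCount (i + 2) a + a.count (i + 1) ∧
      geCount i a = geCount (i + 2) a + a.count (i + 1) + a.count i := by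
  have h₁ : geCount (i + 1) a = geCount (i + 2) a + a.count (i + 1) :=
    geCount_eq_geCount_succ_add_count (i + 1) a
  have h₀ := geCount_eq_geCount_succ_add_count i a
  omega

lemma lt_geCount_of_not_galeLE {a b : List ℕ} {s : ℕ} (hlen : a.length = b.length)
    (hne : ∀ t ≠ s, geCount t a ≤ geCount t b) (h : ¬ GaleLE a b) :
    geCount s b < geCount s a := by
  by_contra! hs
  exact h ⟨hlen, fun t => (eq_or_ne t s).elim (· ▸ hs) (hne t)⟩

section siAct

variable {i : ℕ} {a : List ℕ}

lemma siAct_perm (i : ℕ) (a : List ℕ) : (siAct i a).Perm (a.map (Equiv.swap i (i + 1))) :=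
  List.perm_insertionSort _ _

lemma length_siAct : (siAct i a).length = a.length := by
  simpa using (siAct_perm i a).length_eq

lemma mem_siAct {x : ℕ} : x ∈ siAct i a ↔ Equiv.swap i (i + 1) x ∈ a := by
  rw [(siAct_perm i a).mem_iff, List.mem_map_of_involutive (Equiv.swap_apply_self _ _)]

lemma count_siAct (x : ℕ) : (siAct i a).count x = a.count (Equiv.swap i (i + 1) x) := by
  conv_lhs => rw [(siAct_perm i a).count_eq, ← Equiv.swap_apply_self i (i + 1) x]
  exact List.count_map_of_injective _ _ (Equiv.injective _) _

lemma geCount_siAct_of_ne {t : ℕ} (ht : t ≠ i + 1) : geCount t (siAct i a) = geCount t a := by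
  rw [geCount, (siAct_perm i a).countP_eq, List.countP_map]
  refine List.countP_congr fun x _ => ?_
  simp only [Function.comp_apply, Equiv.swap_apply_def]
  split_ifs <;> simp only [decide_eq_true_eq] <;> omega

lemma geCount_succ_siAct : geCount (i + 1) (siAct i a) = geCount (i + 2) a + a.count i := by
  have h := (geCount_split i (siAct i a)).1
  rwa [geCount_siAct_of_ne (t := i + 2) (by omega), count_siAct, Equiv.swap_apply_right] at h

lemma sortedLT_siAct (h : a.SortedLT) : (siAct i a).SortedLT :=
  List.sortedLT_iff_nodup_and_sortedLE.mpr
    ⟨(siAct_perm i a).nodup_iff.mpr (h.nodup.map (Equiv.injective _)), List.sortedLE_insertionSort⟩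

lemma siAct_siAct (h : a.SortedLT) : siAct i (siAct i a) = a :=
  (sortedLT_siAct (sortedLT_siAct h)).eq_of_mem_iff h (by simp [mem_siAct])

lemma coe_siAct (i : ℕ) (a : List ℕ) :
    (siAct i a : Multiset ℕ) = (a : Multiset ℕ).map (Equiv.swap i (i + 1)) :=
  Multiset.coe_eq_coe.mpr (siAct_perm i a)

lemma coe_siAct_add_coe_eq {b : List ℕ} (ha : a.count i = 1 ∧ a.count (i + 1) = 0)
    (hb : b.count i = 1 ∧ b.count (i + 1) = 0) :
    (siAct i a : Multiset ℕ) + b = a + siAct i b := by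
  ext x
  simp only [Multiset.count_add, Multiset.coe_count, count_siAct, Equiv.swap_apply_def]
  split_ifs <;> subst_vars <;> omega

lemma map_swap_coe_add (i : ℕ) (a b : List ℕ) :
    Multiset.map (fun x => Equiv.swap i (i + 1) x) (↑a + ↑b) =
      (siAct i a : Multiset ℕ) + siAct i b := by
  rw [Multiset.map_add, coe_siAct, coe_siAct]

end siAct

section galeLE_siAct

variable {i : ℕ} {a S : List ℕ}

lemma galeLE_siAct_right (hS : S.count (i + 1) ≤ S.count i) (h : GaleLE a S) :
    GaleLE a (siAct i S) := by
  refine ⟨h.1.trans length_siAct.symm, fun t => ?_⟩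
  rcases eq_or_ne t (i + 1) with rfl | ht
  · have h₁ := h.2 (i + 1)
    rw [(geCount_split i S).1] at h₁
    rw [geCount_succ_siAct]
    omega
  · rw [geCount_siAct_of_ne ht]
    exact h.2 t

lemma galeLE_siAct_siAct (ha : a.Nodup) (hS : S.count (i + 1) ≤ S.count i)
    (h : GaleLE a (siAct i S)) : GaleLE (siAct i a) (siAct i S) := by
  refine ⟨length_siAct.trans h.1, fun t => ?_⟩
  rcases eq_or_ne t (i + 1) with rfl | ht
  · have h₂ := h.2 (i + 2)
    have h₀ := h.2 i
    rw [geCount_siAct_of_ne (by omega)] at h₂ h₀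
    rw [geCount_succ_siAct, geCount_succ_siAct]
    have := (geCount_split i a).2
    have := (geCount_split i S).2
    have := List.nodup_iff_count_le_one.mp ha i
    omega
  · rw [geCount_siAct_of_ne ht, geCount_siAct_of_ne ht, ← geCount_siAct_of_ne (a := S) ht]
    exact h.2 t

lemma galeLE_siAct_left_of_not_galeLE (ha : a.Nodup) (hS : S.Nodup) (h : GaleLE a (siAct i S))
    (hn : ¬ GaleLE a S) : GaleLE (siAct i a) S := by
  have hlt : geCount (i + 1) S < geCount (i + 1) a :=
    lt_geCount_of_not_galeLE (h.1.trans length_siAct)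
      (fun t ht => geCount_siAct_of_ne (a := S) ht ▸ h.2 t) hn
  refine ⟨length_siAct.trans (h.1.trans length_siAct), fun t => ?_⟩
  rcases eq_or_ne t (i + 1) with rfl | ht
  · have h₂ := h.2 (i + 2)
    have h₁ := h.2 (i + 1)
    have h₀ := h.2 i
    rw [geCount_siAct_of_ne (by omega)] at h₂ h₀
    rw [geCount_succ_siAct] at h₁ ⊢
    have := geCount_split i a
    have := geCount_split i S
    have := List.nodup_iff_count_le_one.mp ha (i + 1)
    have := List.nodup_iff_count_le_one.mp hS i
    omega
  · rw [geCount_siAct_of_ne ht, ← geCount_siAct_of_ne (a := S) ht]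
    exact h.2 t

lemma count_eq_of_not_galeLE_siAct (ha : a.Nodup) (h : GaleLE a S)
    (hn : ¬ GaleLE (siAct i a) S) : a.count i = 1 ∧ a.count (i + 1) = 0 := by
  have hlt : geCount (i + 1) S < geCount (i + 1) (siAct i a) :=
    lt_geCount_of_not_galeLE (length_siAct.trans h.1)
      (fun t ht => (geCount_siAct_of_ne ht).symm ▸ h.2 t) hn
  have h₁ := h.2 (i + 1)
  rw [geCount_succ_siAct] at hlt
  have := (geCount_split i a).1
  have := List.nodup_iff_count_le_one.mp ha i
  omega

end galeLE_siAct

lemma val_simpleT_apply {n i : ℕ} (h : i + 1 < n) (x : Fin n) :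
    (simpleT n i h x : ℕ) = Equiv.swap i (i + 1) (x : ℕ) :=
  (Fin.val_injective.swap_apply _ _ x).symm

lemma lt_or_of_swap_lt_swap {i x y : ℕ} (hxy : Equiv.swap i (i + 1) x < Equiv.swap i (i + 1) y) :
    x < y ∨ (x = i + 1 ∧ y = i) := by
  simp only [Equiv.swap_apply_def] at hxy
  split_ifs at hxy <;> omega

section Permutation

variable {n : ℕ} {w : Equiv.Perm (Fin n)} {i : ℕ} {h : i + 1 < n} {m : ℕ}

-- If `w⁻¹ (i + 1) < w⁻¹ i`, every inversion of `s_i w` is an inversion of `w`.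
lemma symm_lt_symm_of_invCount_lt (hlen : invCount w < invCount (simpleT n i h * w)) :
    w.symm ⟨i, by omega⟩ < w.symm ⟨i + 1, h⟩ := by
  by_contra! hge
  refine hlen.not_ge (Finset.card_le_card fun p hp => ?_)
  simp only [Finset.mem_filter, Finset.mem_univ, true_and, Fin.lt_def, Equiv.Perm.mul_apply,
    val_simpleT_apply] at hp ⊢
  refine ⟨hp.1, (lt_or_of_swap_lt_swap hp.2).resolve_right fun ⟨h₂, h₁⟩ => ?_⟩
  have e₁ : p.1 = w.symm ⟨i, by omega⟩ := w.eq_symm_apply.mpr (Fin.ext h₁)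
  have e₂ : p.2 = w.symm ⟨i + 1, h⟩ := w.eq_symm_apply.mpr (Fin.ext h₂)
  rw [← e₁, ← e₂, Fin.le_def] at hge
  omega

lemma sortedLT_wSorted (w : Equiv.Perm (Fin n)) (m : ℕ) : (wSorted w m).SortedLT :=
  Finset.sortedLT_sort _

lemma mem_wSorted {x : ℕ} : x ∈ wSorted w m ↔ ∃ j : Fin n, (j : ℕ) < m ∧ (w j : ℕ) = x := by
  simp [wSorted, firstVals]

lemma wSorted_mul_simpleT : wSorted (simpleT n i h * w) m = siAct i (wSorted w m) := by
  refine (sortedLT_wSorted _ m).eq_of_mem_iff (sortedLT_siAct (sortedLT_wSorted w m)) fun x => ?_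
  simp only [mem_siAct, mem_wSorted, Equiv.Perm.mul_apply, val_simpleT_apply,
    Equiv.swap_apply_eq_iff]

lemma count_succ_le_count_wSorted (hlen : invCount w < invCount (simpleT n i h * w)) :
    (wSorted w m).count (i + 1) ≤ (wSorted w m).count i := by
  have hnd := (sortedLT_wSorted w m).nodup
  by_cases hmem : i + 1 ∈ wSorted w m
  · obtain ⟨j, hj, hwj⟩ := mem_wSorted.mp hmem
    have hj' : j = w.symm ⟨i + 1, h⟩ := w.eq_symm_apply.mpr (Fin.ext hwj)
    have hlt := symm_lt_symm_of_invCount_lt hlen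
    rw [← hj', Fin.lt_def] at hlt
    have hi : i ∈ wSorted w m := mem_wSorted.mpr ⟨w.symm ⟨i, by omega⟩, hlt.trans hj, by simp⟩
    rw [List.count_eq_one_of_mem hnd hmem, List.count_eq_one_of_mem hnd hi]
  · simp [List.count_eq_zero_of_not_mem hmem]

lemma mem_A_iff {a : List ℕ} : a ∈ A w m ↔ a.SortedLT ∧ GaleLE a (wSorted w m) := by
  change a.IsChain (· < ·) ∧ _ ↔ _
  rw [← List.sortedLT_iff_isChain]
  exact and_congr_right fun ha => forall₂_le_iff_galeLE ha.sortedLE.pairwise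
    (sortedLT_wSorted w m).sortedLE.pairwise

lemma A_subset_A_mul (hlen : invCount w < invCount (simpleT n i h * w)) :
    A w m ⊆ A (simpleT n i h * w) m := fun a ha => by
  rw [mem_A_iff] at ha ⊢
  rw [wSorted_mul_simpleT]
  exact ⟨ha.1, galeLE_siAct_right (count_succ_le_count_wSorted hlen) ha.2⟩

lemma siAct_mem_A_mul (hlen : invCount w < invCount (simpleT n i h * w)) {a : List ℕ}
    (ha : a ∈ A (simpleT n i h * w) m) : siAct i a ∈ A (simpleT n i h * w) m := by
  rw [mem_A_iff, wSorted_mul_simpleT] at ha ⊢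
  exact ⟨sortedLT_siAct ha.1,
    galeLE_siAct_siAct ha.1.nodup (count_succ_le_count_wSorted hlen) ha.2⟩

lemma siAct_mem_A_mul_of_mem_Ai (hlen : invCount w < invCount (simpleT n i h * w)) {a : List ℕ}
    (ha : a ∈ Ai w m i) : siAct i a ∈ A (simpleT n i h * w) m :=
  siAct_mem_A_mul hlen (A_subset_A_mul hlen ha.1)

lemma mem_A_or_exists_Ai {a : List ℕ} (ha : a ∈ A (simpleT n i h * w) m) :
    a ∈ A w m ∨ ∃ b ∈ Ai w m i, siAct i b = a := by
  by_cases haw : a ∈ A w m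
  · exact .inl haw
  rw [mem_A_iff] at haw
  rw [mem_A_iff, wSorted_mul_simpleT] at ha
  have hsa : siAct i a ∈ A w m := mem_A_iff.mpr ⟨sortedLT_siAct ha.1,
    galeLE_siAct_left_of_not_galeLE ha.1.nodup (sortedLT_wSorted w m).nodup ha.2
      fun hg => haw ⟨ha.1, hg⟩⟩
  refine .inr ⟨siAct i a, ⟨hsa, ?_⟩, siAct_siAct ha.1⟩
  rwa [siAct_siAct ha.1, mem_A_iff]

lemma count_eq_of_mem_Ai {a : List ℕ} (ha : a ∈ Ai w m i) :
    a.count i = 1 ∧ a.count (i + 1) = 0 := by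
  obtain ⟨ha, hna⟩ := ha
  rw [mem_A_iff] at ha hna
  exact count_eq_of_not_galeLE_siAct ha.1.nodup ha.2 fun hg => hna ⟨sortedLT_siAct ha.1, hg⟩

end Permutation

section Btil

variable {n : ℕ} {w : Equiv.Perm (Fin n)} {i : ℕ} {h : i + 1 < n} {k l : ℕ}

lemma map_swap_mem_Btil_mul (hlen : invCount w < invCount (simpleT n i h * w)) {η : Multiset ℕ}
    (hη : η ∈ Btil (simpleT n i h * w) k l) :
    Multiset.map (fun x => Equiv.swap i (i + 1) x) η ∈ Btil (simpleT n i h * w) k l := by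
  obtain ⟨a, ha, b, hb, rfl⟩ := hη
  exact ⟨_, siAct_mem_A_mul hlen ha, _, siAct_mem_A_mul hlen hb, (map_swap_coe_add i a b).symm⟩

lemma Btil_mul_subset :
    Btil (simpleT n i h * w) k l ⊆
      Btil w k l ∪
      ((fun η => Multiset.map (fun x => Equiv.swap i (i + 1) x) η) '' Btil w k l) ∪
      {η | ∃ a ∈ Ai w l i, ∃ b ∈ Ai w k i,
        (↑a : Multiset ℕ) + (↑(siAct i b) : Multiset ℕ) = η} := by
  rintro _ ⟨a, ha, b, hb, rfl⟩
  rcases mem_A_or_exists_Ai ha with ha | ⟨a, hai, rfl⟩ <;>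
    rcases mem_A_or_exists_Ai hb with hb | ⟨b, hbi, rfl⟩
  · exact .inl (.inl ⟨a, ha, b, hb, rfl⟩)
  · by_cases ha' : siAct i a ∈ A w l
    · refine .inl (.inr ⟨_, ⟨_, ha', b, hbi.1, rfl⟩, (map_swap_coe_add i _ _).trans ?_⟩)
      rw [siAct_siAct (mem_A_iff.mp ha).1]
    · exact .inr ⟨a, ⟨ha, ha'⟩, b, hbi, rfl⟩
  · by_cases hb' : siAct i b ∈ A w k
    · refine .inl (.inr ⟨_, ⟨a, hai.1, _, hb', rfl⟩, (map_swap_coe_add i _ _).trans ?_⟩)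
      rw [siAct_siAct (mem_A_iff.mp hb).1]
    · exact .inr ⟨a, hai, b, ⟨hb, hb'⟩,
        (coe_siAct_add_coe_eq (count_eq_of_mem_Ai hai) (count_eq_of_mem_Ai ⟨hb, hb'⟩)).symm⟩
  · exact .inl (.inr ⟨_, ⟨a, hai.1, b, hbi.1, rfl⟩, map_swap_coe_add i a b⟩)

lemma subset_Btil_mul (hlen : invCount w < invCount (simpleT n i h * w)) :
    Btil w k l ∪
      ((fun η => Multiset.map (fun x => Equiv.swap i (i + 1) x) η) '' Btil w k l) ∪
      {η | ∃ a ∈ Ai w l i, ∃ b ∈ Ai w k i,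
        (↑a : Multiset ℕ) + (↑(siAct i b) : Multiset ℕ) = η} ⊆
    Btil (simpleT n i h * w) k l := by
  rintro _ ((⟨a, ha, b, hb, rfl⟩ | ⟨_, ⟨a, ha, b, hb, rfl⟩, rfl⟩) | ⟨a, ha, b, hb, rfl⟩)
  · exact ⟨a, A_subset_A_mul hlen ha, b, A_subset_A_mul hlen hb, rfl⟩
  · exact map_swap_mem_Btil_mul hlen ⟨a, A_subset_A_mul hlen ha, b, A_subset_A_mul hlen hb, rfl⟩
  · exact ⟨a, A_subset_A_mul hlen ha.1, _, siAct_mem_A_mul_of_mem_Ai hlen hb, rfl⟩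

end Btil

end Bruhat

open Bruhat in
theorem stmt17_general (n : ℕ) (w : Equiv.Perm (Fin n)) (i : ℕ) (h : i + 1 < n)
    (k l : ℕ)
    (hlen : invCount w < invCount (simpleT n i h * w)) :
    Btil (simpleT n i h * w) k l =
      Btil w k l ∪
      ((fun η => Multiset.map (fun x => Equiv.swap i (i + 1) x) η) '' Btil w k l) ∪
      {η | ∃ a ∈ Ai w l i, ∃ b ∈ Ai w k i,
        (↑a : Multiset ℕ) + (↑(siAct i b) : Multiset ℕ) = η} ∧
    ∀ η ∈ Btil (simpleT n i h * w) k l,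
      Multiset.map (fun x => Equiv.swap i (i + 1) x) η ∈ Btil (simpleT n i h * w) k l :=
  ⟨Btil_mul_subset.antisymm (subset_Btil_mul hlen), fun _ => map_swap_mem_Btil_mul hlen⟩

/-- If `ℓ(s_i w) > ℓ(w)`, then `B̃_{k,l}(s_i w)` is the union of `B̃_{k,l}(w)`, its
`s_i`-images, and sums of elements of `A_{l,i}(w)` with `s_i`-images of elements of
`A_{k,i}(w)`; moreover `B̃_{k,l}(s_i w)` is `s_i`-invariant. -/
theorem stmt17 (n : ℕ) (w : Equiv.Perm (Fin n)) (i : ℕ) (h : i + 1 < n)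
    (k l : ℕ) (hkl : k ≤ l)
    (hlen : invCount w < invCount (simpleT n i h * w)) :
    Btil (simpleT n i h * w) k l =
      Btil w k l ∪
      ((fun η => Multiset.map (fun x => Equiv.swap i (i + 1) x) η) '' Btil w k l) ∪
      {η | ∃ a ∈ Ai w l i, ∃ b ∈ Ai w k i,
        (↑a : Multiset ℕ) + (↑(siAct i b) : Multiset ℕ) = η} ∧
    ∀ η ∈ Btil (simpleT n i h * w) k l,
      Multiset.map (fun x => Equiv.swap i (i + 1) x) η ∈ Btil (simpleT n i h * w) k l :=
  stmt17_general n w i h k l hlen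
end
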